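/- In a BCK-union A ⊔ B, any nonzero a ∈ A and nonzero b ∈ B commute: b·(b·a) = 0 = a·(a·b). Consequently, if |A| = n, |B| = m, and A, B have k and ℓ commuting pairs respectively, then A ⊔ B has exactly k + ℓ + 2(n−1)(m−1) − 1 commuting pairs. -/
import Mathlib


/-- In a BCK-union A ⊔ B (modelled on a common carrier `U` covered by the two
subalgebras `TA`, `TB` with `TA ∩ TB = {0}`, with global operation `f` given by
the respective operations `opA`, `opB` on `TA`, `TB` and by `f x y = x`
otherwise), any nonzero a ∈ A and nonzero b ∈ B commute: b·(b·a) = 0 = a·(a·b).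
Consequently if |A| = n, |B| = m and A, B have k and ℓ commuting pairs
respectively, then A ⊔ B has exactly k + ℓ + 2(n−1)(m−1) − 1 commuting pairs. -/
theorem stmt_16 (U : Type*) [Zero U] [Fintype U] [DecidableEq U]
    (TA TB : Finset U) (opA opB : U → U → U)
    (hzA : (0 : U) ∈ TA) (hzB : (0 : U) ∈ TB)
    (hinter : TA ∩ TB = {0}) (hcover : ∀ x : U, x ∈ TA ∨ x ∈ TB)
    (hclosedA : ∀ x ∈ TA, ∀ y ∈ TA, opA x y ∈ TA)
    (hclosedB : ∀ x ∈ TB, ∀ y ∈ TB, opB x y ∈ TB)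
    -- BCK axioms on A
    (hA1 : ∀ x ∈ TA, ∀ y ∈ TA, ∀ z ∈ TA,
      opA (opA (opA x y) (opA x z)) (opA z y) = 0)
    (hA2 : ∀ x ∈ TA, ∀ y ∈ TA, opA (opA x (opA x y)) y = 0)
    (hA3 : ∀ x ∈ TA, opA x x = 0)
    (hA4 : ∀ x ∈ TA, opA 0 x = 0)
    (hA5 : ∀ x ∈ TA, ∀ y ∈ TA, opA x y = 0 → opA y x = 0 → x = y)
    -- BCK axioms on B
    (hB1 : ∀ x ∈ TB, ∀ y ∈ TB, ∀ z ∈ TB,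
      opB (opB (opB x y) (opB x z)) (opB z y) = 0)
    (hB2 : ∀ x ∈ TB, ∀ y ∈ TB, opB (opB x (opB x y)) y = 0)
    (hB3 : ∀ x ∈ TB, opB x x = 0)
    (hB4 : ∀ x ∈ TB, opB 0 x = 0)
    (hB5 : ∀ x ∈ TB, ∀ y ∈ TB, opB x y = 0 → opB y x = 0 → x = y)
    -- the union operation
    (f : U → U → U)
    (hfA : ∀ x ∈ TA, ∀ y ∈ TA, f x y = opA x y)
    (hfB : ∀ x ∈ TB, ∀ y ∈ TB, f x y = opB x y)
    (hf_out : ∀ x y : U, ¬(x ∈ TA ∧ y ∈ TA) → ¬(x ∈ TB ∧ y ∈ TB) → f x y = x)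
    (n m k l : ℕ) (hn : TA.card = n) (hm : TB.card = m)
    (hk : ((TA ×ˢ TA).filter (fun p : U × U =>
      opA p.2 (opA p.2 p.1) = opA p.1 (opA p.1 p.2))).card = k)
    (hl : ((TB ×ˢ TB).filter (fun p : U × U =>
      opB p.2 (opB p.2 p.1) = opB p.1 (opB p.1 p.2))).card = l) :
    (∀ a ∈ TA, a ≠ 0 → ∀ b ∈ TB, b ≠ 0 →
      f b (f b a) = 0 ∧ f a (f a b) = 0) ∧
    (Finset.univ.filter (fun p : U × U =>
        f p.2 (f p.2 p.1) = f p.1 (f p.1 p.2))).card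
      = k + l + 2 * (n - 1) * (m - 1) - 1 := by
  classical
  -- membership basics
  have hnotB : ∀ a ∈ TA, a ≠ 0 → a ∉ TB := by
    intro a ha ha0 hb
    have : a ∈ TA ∩ TB := Finset.mem_inter.mpr ⟨ha, hb⟩
    rw [hinter, Finset.mem_singleton] at this
    exact ha0 this
  have hnotA : ∀ b ∈ TB, b ≠ 0 → b ∉ TA := by
    intro b hb hb0 ha
    have : b ∈ TA ∩ TB := Finset.mem_inter.mpr ⟨ha, hb⟩
    rw [hinter, Finset.mem_singleton] at this
    exact hb0 this
  have key : ∀ a ∈ TA, a ≠ 0 → ∀ b ∈ TB, b ≠ 0 →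
      f b (f b a) = 0 ∧ f a (f a b) = 0 := by
    intro a ha ha0 b hb hb0
    have hbA := hnotA b hb hb0
    have haB := hnotB a ha ha0
    have h1 : f b a = b := hf_out b a (fun h => hbA h.1) (fun h => haB h.2)
    have h2 : f a b = a := hf_out a b (fun h => hbA h.2) (fun h => haB h.1)
    constructor
    · rw [h1, hfB b hb b hb, hB3 b hb]
    · rw [h2, hfA a ha a ha, hA3 a ha]
  refine ⟨key, ?_⟩
  set P : U × U → Prop := fun p => f p.2 (f p.2 p.1) = f p.1 (f p.1 p.2) with hPdef
  have hPA : ∀ p : U × U, p ∈ TA ×ˢ TA →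
      (P p ↔ opA p.2 (opA p.2 p.1) = opA p.1 (opA p.1 p.2)) := by
    intro p hp
    rw [Finset.mem_product] at hp
    obtain ⟨h1, h2⟩ := hp
    simp only [hPdef]
    rw [hfA p.2 h2 p.1 h1, hfA p.2 h2 _ (hclosedA p.2 h2 p.1 h1),
      hfA p.1 h1 p.2 h2, hfA p.1 h1 _ (hclosedA p.1 h1 p.2 h2)]
  have hPB : ∀ p : U × U, p ∈ TB ×ˢ TB →
      (P p ↔ opB p.2 (opB p.2 p.1) = opB p.1 (opB p.1 p.2)) := by
    intro p hp
    rw [Finset.mem_product] at hp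
    obtain ⟨h1, h2⟩ := hp
    simp only [hPdef]
    rw [hfB p.2 h2 p.1 h1, hfB p.2 h2 _ (hclosedB p.2 h2 p.1 h1),
      hfB p.1 h1 p.2 h2, hfB p.1 h1 _ (hclosedB p.1 h1 p.2 h2)]
  set A1 := (TA ×ˢ TA).filter (fun p => P p) with hA1def
  set B0 := (TB ×ˢ TB).filter (fun p => P p) with hB0def
  set B1 := B0.erase ((0 : U), (0 : U)) with hB1def
  set M1 := (TA.erase 0) ×ˢ (TB.erase 0) with hM1def
  set M2 := (TB.erase 0) ×ˢ (TA.erase 0) with hM2def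
  -- M1 and M2 consist of commuting pairs
  have hM1P : ∀ p : U × U, p ∈ M1 → P p := by
    intro p hp
    rw [hM1def, Finset.mem_product, Finset.mem_erase, Finset.mem_erase] at hp
    obtain ⟨⟨hx0, hxA⟩, ⟨hy0, hyB⟩⟩ := hp
    obtain ⟨e1, e2⟩ := key p.1 hxA hx0 p.2 hyB hy0
    simp only [hPdef]
    rw [e1, e2]
  have hM2P : ∀ p : U × U, p ∈ M2 → P p := by
    intro p hp
    rw [hM2def, Finset.mem_product, Finset.mem_erase, Finset.mem_erase] at hp
    obtain ⟨⟨hx0, hxB⟩, ⟨hy0, hyA⟩⟩ := hp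
    obtain ⟨e1, e2⟩ := key p.2 hyA hy0 p.1 hxB hx0
    simp only [hPdef]
    rw [e1, e2]
  -- the decomposition
  have hunion : Finset.univ.filter (fun p : U × U => P p) = A1 ∪ B1 ∪ M1 ∪ M2 := by
    ext p
    simp only [Finset.mem_filter, Finset.mem_univ, true_and, Finset.mem_union]
    constructor
    · intro hp
      by_cases hx : p.1 ∈ TB
      · by_cases hy : p.2 ∈ TB
        · by_cases h00 : p = ((0 : U), (0 : U))
          · left; left; left
            rw [hA1def, Finset.mem_filter, Finset.mem_product, h00]
            exact ⟨⟨hzA, hzA⟩, h00 ▸ hp⟩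
          · left; left; right
            rw [hB1def, Finset.mem_erase, hB0def, Finset.mem_filter, Finset.mem_product]
            exact ⟨h00, ⟨hx, hy⟩, hp⟩
        · -- p.1 ∈ TB, p.2 ∈ TA \ TB
          have hyA : p.2 ∈ TA := (hcover p.2).resolve_right hy
          by_cases hxA : p.1 ∈ TA
          · left; left; left
            rw [hA1def, Finset.mem_filter, Finset.mem_product]
            exact ⟨⟨hxA, hyA⟩, hp⟩
          · right
            rw [hM2def, Finset.mem_product, Finset.mem_erase, Finset.mem_erase]
            refine ⟨⟨fun h => hxA (h ▸ hzA), hx⟩, ⟨fun h => hy (h ▸ hzB), hyA⟩⟩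
      · have hxA : p.1 ∈ TA := (hcover p.1).resolve_right hx
        by_cases hyA : p.2 ∈ TA
        · left; left; left
          rw [hA1def, Finset.mem_filter, Finset.mem_product]
          exact ⟨⟨hxA, hyA⟩, hp⟩
        · have hyB : p.2 ∈ TB := (hcover p.2).resolve_left hyA
          left; right
          rw [hM1def, Finset.mem_product, Finset.mem_erase, Finset.mem_erase]
          exact ⟨⟨fun h => hx (h ▸ hzB), hxA⟩, ⟨fun h => hyA (h ▸ hzA), hyB⟩⟩
    · intro hp
      rcases hp with ((h | h) | h) | h
      · exact (Finset.mem_filter.mp h).2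
      · exact (Finset.mem_filter.mp (Finset.mem_of_mem_erase h)).2
      · exact hM1P p h
      · exact hM2P p h
  -- disjointness
  have dAB : Disjoint A1 B1 := by
    rw [Finset.disjoint_left]
    intro p hpA hpB
    rw [hA1def, Finset.mem_filter, Finset.mem_product] at hpA
    rw [hB1def, Finset.mem_erase, hB0def, Finset.mem_filter, Finset.mem_product] at hpB
    obtain ⟨hne, ⟨hx, hy⟩, -⟩ := hpB
    by_cases hx0 : p.1 = 0
    · by_cases hy0 : p.2 = 0
      · exact hne (Prod.ext hx0 hy0)
      · exact hnotA p.2 hy hy0 hpA.1.2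
    · exact hnotA p.1 hx hx0 hpA.1.1
  have dAM1 : Disjoint A1 M1 := by
    rw [Finset.disjoint_left]
    intro p hpA hpM
    rw [hA1def, Finset.mem_filter, Finset.mem_product] at hpA
    rw [hM1def, Finset.mem_product, Finset.mem_erase, Finset.mem_erase] at hpM
    exact hnotA p.2 hpM.2.2 hpM.2.1 hpA.1.2
  have dAM2 : Disjoint A1 M2 := by
    rw [Finset.disjoint_left]
    intro p hpA hpM
    rw [hA1def, Finset.mem_filter, Finset.mem_product] at hpA
    rw [hM2def, Finset.mem_product, Finset.mem_erase, Finset.mem_erase] at hpM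
    exact hnotA p.1 hpM.1.2 hpM.1.1 hpA.1.1
  have dBM1 : Disjoint B1 M1 := by
    rw [Finset.disjoint_left]
    intro p hpB hpM
    rw [hB1def, Finset.mem_erase, hB0def, Finset.mem_filter, Finset.mem_product] at hpB
    rw [hM1def, Finset.mem_product, Finset.mem_erase, Finset.mem_erase] at hpM
    exact hnotB p.1 hpM.1.2 hpM.1.1 hpB.2.1.1
  have dBM2 : Disjoint B1 M2 := by
    rw [Finset.disjoint_left]
    intro p hpB hpM
    rw [hB1def, Finset.mem_erase, hB0def, Finset.mem_filter, Finset.mem_product] at hpB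
    rw [hM2def, Finset.mem_product, Finset.mem_erase, Finset.mem_erase] at hpM
    exact hnotB p.2 hpM.2.2 hpM.2.1 hpB.2.1.2
  have dM1M2 : Disjoint M1 M2 := by
    rw [Finset.disjoint_left]
    intro p hp1 hp2
    rw [hM1def, Finset.mem_product, Finset.mem_erase, Finset.mem_erase] at hp1
    rw [hM2def, Finset.mem_product, Finset.mem_erase, Finset.mem_erase] at hp2
    exact hnotB p.1 hp1.1.2 hp1.1.1 hp2.1.2
  -- cards
  have hA1card : A1.card = k := by
    rw [hA1def, Finset.filter_congr hPA, hk]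
  have hB0card : B0.card = l := by
    rw [hB0def, Finset.filter_congr hPB, hl]
  have h00B : ((0 : U), (0 : U)) ∈ B0 := by
    rw [hB0def, Finset.mem_filter, Finset.mem_product]
    exact ⟨⟨hzB, hzB⟩, rfl⟩
  have hlpos : 1 ≤ l := by
    rw [← hB0card]
    exact Finset.card_pos.mpr ⟨_, h00B⟩
  have hB1card : B1.card = l - 1 := by
    rw [hB1def, Finset.card_erase_of_mem h00B, hB0card]
  have hM1card : M1.card = (n - 1) * (m - 1) := by
    rw [hM1def, Finset.card_product, Finset.card_erase_of_mem hzA,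
      Finset.card_erase_of_mem hzB, hn, hm]
  have hM2card : M2.card = (n - 1) * (m - 1) := by
    rw [hM2def, Finset.card_product, Finset.card_erase_of_mem hzA,
      Finset.card_erase_of_mem hzB, hn, hm, Nat.mul_comm]
  have hcard : (Finset.univ.filter (fun p : U × U => P p)).card
      = k + (l - 1) + (n - 1) * (m - 1) + (n - 1) * (m - 1) := by
    rw [hunion, Finset.card_union_of_disjoint, Finset.card_union_of_disjoint,
      Finset.card_union_of_disjoint dAB, hA1card, hB1card, hM1card, hM2card]
    · exact Finset.disjoint_union_left.mpr ⟨dAM1, dBM1⟩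
    · exact Finset.disjoint_union_left.mpr
        ⟨Finset.disjoint_union_left.mpr ⟨dAM2, dBM2⟩, dM1M2⟩
  rw [hcard, Nat.mul_assoc]
  obtain ⟨q, hq⟩ : ∃ q, (n - 1) * (m - 1) = q := ⟨_, rfl⟩
  rw [hq]
  omega
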